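/- Let f be a Boolean function on n bits, p ∈ (1/2,1), and let κ_0(n,p) = 1/(1 + (1/n)·((1−p)/2)^n). Then for every κ > κ_0(n,p), the distributional (p,κ)-algorithmic complexity equals the distributional algorithmic complexity: a_{p,κ}(f,π_{1/2}) = a(f,π_{1/2}). -/

import Mathlib

open Classical

noncomputable section

/-- Flip the bits of `x` in the set `B`. -/
def flipOn {ι : Type*} [DecidableEq ι] (x : ι → Bool) (B : Finset ι) : ι → Bool :=
  fun i => if i ∈ B then !(x i) else x i

/-- Pointwise sensitivity of `f` at `x`. -/
def sensAt {ι : Type*} [Fintype ι] [DecidableEq ι] (f : (ι → Bool) → Bool)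
    (x : ι → Bool) : ℕ :=
  (Finset.univ.filter fun i => f (flipOn x {i}) ≠ f x).card

/-- Pointwise block sensitivity of `f` at `x`. -/
def bsAt {ι : Type*} [DecidableEq ι] (f : (ι → Bool) → Bool) (x : ι → Bool) : ℕ :=
  sSup {m | ∃ B : Fin m → Finset ι,
    (∀ j, f (flipOn x (B j)) ≠ f x) ∧ ∀ j k, j ≠ k → Disjoint (B j) (B k)}

/-- `W` is a witness set for `f` at `x`. -/
def IsWitness {ι : Type*} (f : (ι → Bool) → Bool) (x : ι → Bool) (W : Finset ι) : Prop :=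
  ∀ y, (∀ i ∈ W, y i = x i) → f y = f x

/-- Pointwise minimum witness size of `f` at `x`. -/
def witAt {ι : Type*} (f : (ι → Bool) → Bool) (x : ι → Bool) : ℕ :=
  sInf {k | ∃ W : Finset ι, W.card = k ∧ IsWitness f x W}

/-- Decision trees querying coordinates in `ι`. -/
inductive DTree (ι : Type*) where
  | leaf : DTree ι
  | node : ι → DTree ι → DTree ι → DTree ι

/-- The set of coordinates queried by the tree `T` on input `x`. -/
def DTree.path {ι : Type*} [DecidableEq ι] : DTree ι → (ι → Bool) → Finset ι
  | .leaf, _ => ∅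
  | .node i t0 t1, x => insert i (if x i then t1.path x else t0.path x)

/-- The tree `T` determines `f`: at each leaf the queried bits witness the value of `f`. -/
def DTree.Determines {ι : Type*} [DecidableEq ι] (T : DTree ι)
    (f : (ι → Bool) → Bool) : Prop :=
  ∀ x, IsWitness f x (T.path x)

/-- A partition of the hypercube into subcubes, encoded by the map sending each point to
the code (fixed coordinates) of its part. -/
structure SubcubePartition (ι : Type*) where
  code : (ι → Bool) → (ι → Option Bool)
  self_mem : ∀ x i b, code x i = some b → x i = b
  compat : ∀ x y, (∀ i b, code x i = some b → y i = b) → code y = code x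

/-- Number of coordinates fixed by the subcube containing `x`. -/
def SubcubePartition.codim {ι : Type*} [Fintype ι] (P : SubcubePartition ι)
    (x : ι → Bool) : ℕ :=
  (Finset.univ.filter fun i => (P.code x i).isSome).card

/-- The partition determines `f`, i.e. `f` is constant on each part. -/
def SubcubePartition.Determines {ι : Type*} (P : SubcubePartition ι)
    (f : (ι → Bool) → Bool) : Prop :=
  ∀ x y, (∀ i b, P.code x i = some b → y i = b) → f y = f x

/-- Deterministic sensitivity. -/
def detSens {ι : Type*} [Fintype ι] [DecidableEq ι] (f : (ι → Bool) → Bool) : ℕ :=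
  Finset.univ.sup fun x => sensAt f x

/-- Deterministic block sensitivity. -/
def detBS {ι : Type*} [Fintype ι] [DecidableEq ι] (f : (ι → Bool) → Bool) : ℕ :=
  Finset.univ.sup fun x => bsAt f x

/-- Deterministic witness complexity. -/
def detWit {ι : Type*} [Fintype ι] [DecidableEq ι] (f : (ι → Bool) → Bool) : ℕ :=
  Finset.univ.sup fun x => witAt f x

/-- Deterministic subcube partition complexity. -/
def detSC {ι : Type*} [Fintype ι] (f : (ι → Bool) → Bool) : ℕ :=
  sInf {k | ∃ P : SubcubePartition ι, P.Determines f ∧ ∀ x, P.codim x ≤ k}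

/-- Deterministic algorithmic (decision tree) complexity. -/
def detAlg {ι : Type*} [Fintype ι] [DecidableEq ι] (f : (ι → Bool) → Bool) : ℕ :=
  sInf {k | ∃ T : DTree ι, T.Determines f ∧ ∀ x, (T.path x).card ≤ k}

/-- Weight of the configuration `x` under the product Bernoulli(p) measure `π_p`. -/
def wt {ι : Type*} [Fintype ι] (p : ℝ) (x : ι → Bool) : ℝ :=
  ∏ i, (if x i then p else 1 - p)

/-- Expectation under `π_p`. -/
def expec {ι : Type*} [Fintype ι] [DecidableEq ι] (p : ℝ) (g : (ι → Bool) → ℝ) : ℝ :=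
  ∑ x, wt p x * g x

/-- Distributional sensitivity. -/
def distSens {ι : Type*} [Fintype ι] [DecidableEq ι] (f : (ι → Bool) → Bool) (p : ℝ) : ℝ :=
  expec p fun x => (sensAt f x : ℝ)

/-- Distributional block sensitivity. -/
def distBS {ι : Type*} [Fintype ι] [DecidableEq ι] (f : (ι → Bool) → Bool) (p : ℝ) : ℝ :=
  expec p fun x => (bsAt f x : ℝ)

/-- Distributional witness complexity. -/
def distWit {ι : Type*} [Fintype ι] [DecidableEq ι] (f : (ι → Bool) → Bool) (p : ℝ) : ℝ :=
  expec p fun x => (witAt f x : ℝ)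

/-- Distributional subcube partition complexity. -/
def distSC {ι : Type*} [Fintype ι] [DecidableEq ι] (f : (ι → Bool) → Bool) (p : ℝ) : ℝ :=
  sInf {c | ∃ P : SubcubePartition ι, P.Determines f ∧
    c = expec p fun x => (P.codim x : ℝ)}

/-- Distributional algorithmic complexity. -/
def distAlg {ι : Type*} [Fintype ι] [DecidableEq ι] (f : (ι → Bool) → Bool) (p : ℝ) : ℝ :=
  sInf {c | ∃ T : DTree ι, T.Determines f ∧
    c = expec p fun x => ((T.path x).card : ℝ)}

/-- `μ x J` is the joint probability that the bits equal `x` and the random set equals `J`;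
the conditions say: the marginal of the bits is `π_p`, the random set is a.s. a witness set
for `f`, and the random set is local (conditionally on `{I = J}` and the bits on `J`, the
bits outside `J` are still i.i.d. Bernoulli(p)). -/
def IsLocalWitnessSystem {ι : Type*} [Fintype ι] [DecidableEq ι]
    (f : (ι → Bool) → Bool) (p : ℝ) (μ : (ι → Bool) → Finset ι → ℝ) : Prop :=
  (∀ x J, 0 ≤ μ x J) ∧
  (∀ x, ∑ J, μ x J = wt p x) ∧
  (∀ x J, μ x J ≠ 0 → IsWitness f x J) ∧
  (∀ (J : Finset ι) x y, (∀ i ∈ J, x i = y i) → μ x J * wt p y = μ y J * wt p x)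

/-- Distributional local witness complexity. -/
def distLocal {ι : Type*} [Fintype ι] [DecidableEq ι]
    (f : (ι → Bool) → Bool) (p : ℝ) : ℝ :=
  sInf {c | ∃ μ : (ι → Bool) → Finset ι → ℝ, IsLocalWitnessSystem f p μ ∧
    c = ∑ x, ∑ J, μ x J * (J.card : ℝ)}

/-- Trees of adaptive queries in the partial-information model: `nodeZ i` asks the
`(1-p)/p` question for bit `i` (revealing the proxy `Z_i`) and `nodeX i` asks the `0/1`
question for bit `i` (revealing the true bit `X_i`). -/
inductive PTree (n : ℕ) where
  | leaf : PTree n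
  | nodeZ : Fin n → PTree n → PTree n → PTree n
  | nodeX : Fin n → PTree n → PTree n → PTree n

/-- Running the tree on proxies `z` and true bits `x`: returns the pair
(set of bits whose proxy `Z` was queried, set of bits whose true value `X` was queried). -/
def PTree.run {n : ℕ} : PTree n → (Fin n → Bool) → (Fin n → Bool) →
    Finset (Fin n) × Finset (Fin n)
  | .leaf, _, _ => (∅, ∅)
  | .nodeZ i t0 t1, z, x =>
      (insert i (if z i then (t1.run z x).1 else (t0.run z x).1),
        if z i then (t1.run z x).2 else (t0.run z x).2)
  | .nodeX i t0 t1, z, x =>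
      ((if x i then (t1.run z x).1 else (t0.run z x).1),
        insert i (if x i then (t1.run z x).2 else (t0.run z x).2))

/-- Validity: the `0/1` question for a bit is only asked after its `(1-p)/p` question. -/
def PTree.Valid {n : ℕ} (T : PTree n) : Prop :=
  ∀ z x : Fin n → Bool, (T.run z x).2 ⊆ (T.run z x).1

/-- The tree determines `f`: at each leaf, the revealed true bits witness `f`. -/
def PTree.DeterminesP {n : ℕ} (T : PTree n) (f : (Fin n → Bool) → Bool) : Prop :=
  ∀ z x : Fin n → Bool, IsWitness f x (T.run z x).2

/-- Joint weight of `(z, x)`: the bits `X_i` are i.i.d. uniform, the proxies `Z_i` are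
uniform with `P[Z_i = X_i] = p`, and the pairs are independent across `i`. -/
def wt2 {n : ℕ} (p : ℝ) (z x : Fin n → Bool) : ℝ :=
  ∏ i, (if z i = x i then p / 2 else (1 - p) / 2)

/-- Expected cost of the tree: `κ` per bit with only the partial question asked, `1` per
bit fully revealed, at the stopping time. -/
def pCost {n : ℕ} (p κ : ℝ) (T : PTree n) : ℝ :=
  ∑ z, ∑ x, wt2 p z x *
    (κ * (((T.run z x).1 \ (T.run z x).2).card : ℝ) + (((T.run z x).2).card : ℝ))

/-- Distributional `(p,κ)`-algorithmic complexity `a_{p,κ}(f, π_{1/2})`. -/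
def aPK {n : ℕ} (f : (Fin n → Bool) → Bool) (p κ : ℝ) : ℝ :=
  sInf {c | ∃ T : PTree n, T.Valid ∧ T.DeterminesP f ∧ c = pCost p κ T}

/-!
Write `Z = X ∆ c`: the noise pattern `c` is independent of `X` and has law `π_{1-p}`. For fixed
`c`, answering every `Z_i`-question of `T ∈ A_p` by a query of `X_i` yields a decision tree
which queries exactly the bits whose proxy `T` queries; hence, averaged over `c`, `T` queries at
least `a(f, π_{1/2})` proxies, and induced algorithms give the reverse inequality.

If some execution of `T` asks the `Z_i`-question but never the `X_i`-question, hardwire the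
answer to `Z_i` instead: the resulting decision tree saves a query exactly on such executions,
and its cost averages the two noise patterns that differ at `i`, each of probability at least
`(1-p)^n`. So `T` queries on average at least `a(f, π_{1/2}) + ((1-p)/2)^n` proxies, while paying
`κ` instead of `1` for unrevealed bits saves at most `(1-κ)n`; `κ > κ₀(n,p)` says exactly that
`(1-κ)n < κ((1-p)/2)^n`.
-/

open Finset
open scoped symmDiff

lemma symmDiff_update {ι : Type*} [DecidableEq ι] (x c : ι → Bool) (i : ι) (b : Bool) :
    x ∆ Function.update c i b = Function.update (x ∆ c) i (x i ^^ b) := by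
  ext j
  by_cases hj : j = i
  · subst hj; simp
  · simp [hj]

section Expectation

variable {ι : Type*} [Fintype ι]

lemma wt_nonneg {q : ℝ} (hq0 : 0 ≤ q) (hq1 : q ≤ 1) (x : ι → Bool) : 0 ≤ wt q x :=
  prod_nonneg fun i _ => by split <;> linarith

lemma pow_card_le_wt {q : ℝ} (hq0 : 0 ≤ q) (hq : q ≤ 1 - q) (x : ι → Bool) :
    q ^ Fintype.card ι ≤ wt q x := by
  rw [← card_univ, ← prod_const]
  exact prod_le_prod (fun _ _ => hq0) fun i _ => by split <;> linarith

variable [DecidableEq ι]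

lemma sum_wt (q : ℝ) : ∑ x : ι → Bool, wt q x = 1 := by
  simp [wt, ← Fintype.prod_sum fun (_ : ι) (b : Bool) => if b then q else 1 - q]

lemma expec_const (q a : ℝ) : expec q (fun _ : ι → Bool => a) = a := by
  rw [expec, ← sum_mul, sum_wt, one_mul]

lemma expec_sub (q : ℝ) (g h : (ι → Bool) → ℝ) :
    expec q (fun x => g x - h x) = expec q g - expec q h := by
  simp only [expec, mul_sub, sum_sub_distrib]

lemma expec_const_mul (q a : ℝ) (g : (ι → Bool) → ℝ) :
    expec q (fun x => a * g x) = a * expec q g := by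
  simp only [expec, mul_sum]
  exact sum_congr rfl fun x _ => by ring

lemma expec_mono {q : ℝ} (hq0 : 0 ≤ q) (hq1 : q ≤ 1) {g h : (ι → Bool) → ℝ}
    (hgh : ∀ x, g x ≤ h x) : expec q g ≤ expec q h :=
  sum_le_sum fun x _ => mul_le_mul_of_nonneg_left (hgh x) (wt_nonneg hq0 hq1 x)

lemma le_expec_of_le {q a : ℝ} (hq0 : 0 ≤ q) (hq1 : q ≤ 1) {g : (ι → Bool) → ℝ}
    (hg : ∀ x, a ≤ g x) : a ≤ expec q g :=
  (expec_const q a).symm.le.trans (expec_mono hq0 hq1 hg)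

lemma expec_le_of_le {q a : ℝ} (hq0 : 0 ≤ q) (hq1 : q ≤ 1) {g : (ι → Bool) → ℝ}
    (hg : ∀ x, g x ≤ a) : expec q g ≤ a :=
  (expec_mono hq0 hq1 hg).trans (expec_const q a).le

lemma add_mul_le_expec_of_pair {q a δ : ℝ} (hq0 : 0 ≤ q) (hq : q ≤ 1 - q)
    {g : (ι → Bool) → ℝ} (hg : ∀ x, a ≤ g x) {x₀ x₁ : ι → Bool} (hne : x₀ ≠ x₁)
    (hpair : 2 * a + δ ≤ g x₀ + g x₁) : a + q ^ Fintype.card ι * δ ≤ expec q g := by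
  have hwt : ∀ x, q ^ Fintype.card ι * (g x - a) ≤ wt q x * (g x - a) := fun x =>
    mul_le_mul_of_nonneg_right (pow_card_le_wt hq0 hq x) (sub_nonneg.mpr (hg x))
  have hpos : ∀ x, 0 ≤ wt q x * (g x - a) := fun x =>
    (mul_nonneg (pow_nonneg hq0 _) (sub_nonneg.mpr (hg x))).trans (hwt x)
  have hsub : wt q x₀ * (g x₀ - a) + wt q x₁ * (g x₁ - a) ≤ expec q g - a := by
    have : expec q g - a = ∑ x, wt q x * (g x - a) := by
      simp only [expec, mul_sub, sum_sub_distrib, ← sum_mul, sum_wt, one_mul]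
    rw [← sum_pair (f := fun x : ι → Bool => wt q x * (g x - a)) hne, this]
    exact sum_le_sum_of_subset_of_nonneg (subset_univ _) fun x _ _ => hpos x
  nlinarith [hwt x₀, hwt x₁, pow_nonneg hq0 (Fintype.card ι)]

/-- Hardwiring the `i`-th proxy to each of its two values sees, in total, the same pairs
`(Z, X)` as the two noise patterns that differ only at `i`. -/
lemma sum_bool_expec_update_symmDiff (c : ι → Bool) (i : ι)
    (F : (ι → Bool) → (ι → Bool) → ℝ) :
    ∑ b : Bool, expec (1 / 2) (fun x => F (Function.update (x ∆ c) i b) x)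
      = ∑ b : Bool, expec (1 / 2) (fun x => F (x ∆ Function.update c i b) x) := by
  simp only [Fintype.sum_bool, expec, ← sum_add_distrib, ← mul_add, symmDiff_update]
  refine sum_congr rfl fun x _ => ?_
  cases x i <;> simp [add_comm]

end Expectation

lemma IsWitness.mono {ι : Type*} {f : (ι → Bool) → Bool} {x : ι → Bool} {W W' : Finset ι}
    (hW : IsWitness f x W) (h : W ⊆ W') : IsWitness f x W' :=
  fun y hy => hW y fun i hi => hy i (h hi)

lemma DTree.exists_determines {ι : Type*} [Fintype ι] [DecidableEq ι]
    (f : (ι → Bool) → Bool) : ∃ S : DTree ι, S.Determines f := by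
  have hlist : ∀ l : List ι, ∃ S : DTree ι, ∀ x, S.path x = l.toFinset := by
    intro l
    induction l with
    | nil => exact ⟨.leaf, fun _ => rfl⟩
    | cons a l ih =>
      obtain ⟨S, hS⟩ := ih
      exact ⟨.node a S S, fun x => by cases x a <;> simp [DTree.path, hS]⟩
  obtain ⟨S, hS⟩ := hlist univ.toList
  exact ⟨S, fun x y hy => congrArg f (funext fun i => hy i (by simp [hS]))⟩

lemma distAlg_le_expec {ι : Type*} [Fintype ι] [DecidableEq ι] {f : (ι → Bool) → Bool}
    {p : ℝ} (hp0 : 0 ≤ p) (hp1 : p ≤ 1) {S : DTree ι} (hS : S.Determines f) :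
    distAlg f p ≤ expec p fun x => ((S.path x).card : ℝ) :=
  csInf_le ⟨0, by
    rintro _ ⟨S', -, rfl⟩
    exact le_expec_of_le hp0 hp1 fun x => Nat.cast_nonneg _⟩ ⟨S, hS, rfl⟩

lemma card_sdiff_singleton_union_add_le {α : Type*} [DecidableEq α] {A B : Finset α}
    (hBA : B ⊆ A) (i : α) : #(A \ {i} ∪ B) + (if i ∈ A \ B then 1 else 0) ≤ #A := by
  split_ifs with hi
  · rw [mem_sdiff] at hi
    have hsub : A \ {i} ∪ B ⊆ A.erase i := by
      rw [← sdiff_singleton_eq_erase]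
      exact union_subset Subset.rfl fun j hj => mem_sdiff.mpr
        ⟨hBA hj, fun hj' => hi.2 (mem_singleton.mp hj' ▸ hj)⟩
    have := card_erase_add_one hi.1
    have := card_le_card hsub
    omega
  · exact card_le_card (union_subset sdiff_subset hBA)

section Noise

variable {n : ℕ}

lemma wt2_symmDiff_left (p : ℝ) (x c : Fin n → Bool) :
    wt2 p (x ∆ c) x = wt (1 / 2) x * wt (1 - p) c := by
  rw [wt2, wt, wt, ← prod_mul_distrib]
  refine prod_congr rfl fun i _ => ?_
  cases hx : x i <;> cases hc : c i <;> simp [hx, hc] <;> ring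

lemma sum_sum_wt2_mul (p : ℝ) (F : (Fin n → Bool) → (Fin n → Bool) → ℝ) :
    ∑ z, ∑ x, wt2 p z x * F z x = expec (1 - p) fun c => expec (1 / 2) fun x => F (x ∆ c) x := by
  have hreindex : ∀ x, ∑ z, wt2 p z x * F z x = ∑ c, wt2 p (x ∆ c) x * F (x ∆ c) x := fun x =>
    ((symmDiff_right_involutive x).bijective.sum_comp fun z => wt2 p z x * F z x).symm
  rw [sum_comm]
  simp only [hreindex, wt2_symmDiff_left, expec, mul_sum]
  rw [sum_comm]
  exact sum_congr rfl fun c _ => sum_congr rfl fun x _ => by ring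

end Noise

namespace PTree

variable {n : ℕ}

/-- The induced algorithm of a decision tree: every `X_i` is queried right after `Z_i`. -/
def ofDTree : DTree (Fin n) → PTree n
  | .leaf => .leaf
  | .node i t₀ t₁ =>
      .nodeZ i (.nodeX i (ofDTree t₀) (ofDTree t₁)) (.nodeX i (ofDTree t₀) (ofDTree t₁))

lemma run_ofDTree (S : DTree (Fin n)) (z x : Fin n → Bool) :
    (ofDTree S).run z x = (S.path x, S.path x) := by
  induction S with
  | leaf => rfl
  | node i t₀ t₁ ih₀ ih₁ => cases z i <;> cases x i <;> simp [ofDTree, run, DTree.path, *]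

/-- A decision tree simulating `T` under the noise pattern `c` (so that `Z = X ∆ c`), except
that for `i ∈ H` the answer to the `Z_i` question is hardwired to `c i` instead of being
computed from a query of `X_i`. -/
def simulate (H : Finset (Fin n)) (c : Fin n → Bool) : PTree n → DTree (Fin n)
  | .leaf => .leaf
  | .nodeZ i t₀ t₁ =>
      if i ∈ H then (if c i then t₁.simulate H c else t₀.simulate H c)
      else .node i (if c i then t₁.simulate H c else t₀.simulate H c)
        (if c i then t₀.simulate H c else t₁.simulate H c)
  | .nodeX i t₀ t₁ => .node i (t₀.simulate H c) (t₁.simulate H c)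

lemma path_simulate (H : Finset (Fin n)) (c : Fin n → Bool) (T : PTree n) (x : Fin n → Bool) :
    (T.simulate H c).path x = (T.run (H.piecewise c (x ∆ c)) x).1 \ H
      ∪ (T.run (H.piecewise c (x ∆ c)) x).2 := by
  induction T with
  | leaf => simp [simulate, run, DTree.path]
  | nodeZ i t₀ t₁ ih₀ ih₁ =>
    by_cases hi : i ∈ H
    · cases hc : c i <;> simp [simulate, run, hi, hc, ih₀, ih₁, insert_sdiff_of_mem]
    · cases hx : x i <;> cases hc : c i <;>
        simp [simulate, run, DTree.path, hi, hx, hc, ih₀, ih₁, insert_sdiff_of_notMem,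
          insert_union]
  | nodeX i t₀ t₁ ih₀ ih₁ =>
    cases hx : x i <;> simp [simulate, run, DTree.path, hx, ih₀, ih₁, union_insert]

lemma determines_simulate {f : (Fin n → Bool) → Bool} {T : PTree n} (hT : T.DeterminesP f)
    (H : Finset (Fin n)) (c : Fin n → Bool) : (T.simulate H c).Determines f := fun x => by
  rw [path_simulate]
  exact (hT _ x).mono subset_union_right

lemma valid_ofDTree (S : DTree (Fin n)) : (ofDTree S).Valid := fun z x => by
  rw [run_ofDTree]

lemma determinesP_ofDTree {f : (Fin n → Bool) → Bool} {S : DTree (Fin n)} (hS : S.Determines f) :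
    (ofDTree S).DeterminesP f := fun z x => by
  rw [run_ofDTree]
  exact hS x

lemma pCost_ofDTree (p κ : ℝ) (S : DTree (Fin n)) :
    pCost p κ (ofDTree S) = expec (1 / 2) fun x => ((S.path x).card : ℝ) := by
  simp only [pCost, run_ofDTree, sdiff_self, bot_eq_empty, card_empty, Nat.cast_zero, mul_zero,
    zero_add]
  rw [sum_sum_wt2_mul, expec_const]

lemma pCost_eq_sub {T : PTree n} (hv : T.Valid) (p κ : ℝ) :
    pCost p κ T = (expec (1 - p) fun c => expec (1 / 2) fun x => (#(T.run (x ∆ c) x).1 : ℝ))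
      - (1 - κ) * expec (1 - p) fun c => expec (1 / 2) fun x =>
          (#((T.run (x ∆ c) x).1 \ (T.run (x ∆ c) x).2) : ℝ) := by
  rw [pCost, sum_sum_wt2_mul, ← expec_const_mul, ← expec_sub]
  congr 1
  funext c
  rw [← expec_const_mul, ← expec_sub]
  congr 1
  funext x
  rw [card_sdiff_of_subset (hv _ x), Nat.cast_sub (card_le_card (hv _ x))]
  ring

def proxyOnly (T : PTree n) (i : Fin n) (z x : Fin n → Bool) : ℝ :=
  if i ∈ (T.run z x).1 \ (T.run z x).2 then 1 else 0

variable {f : (Fin n → Bool) → Bool} {T : PTree n}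

lemma distAlg_le_expec_card_run_fst (hv : T.Valid) (hd : T.DeterminesP f) (c : Fin n → Bool) :
    distAlg f (1 / 2) ≤ expec (1 / 2) fun x => (#(T.run (x ∆ c) x).1 : ℝ) := by
  refine (distAlg_le_expec (by norm_num) (by norm_num) (determines_simulate hd ∅ c)).trans_eq
    (congrArg _ (funext fun x => ?_))
  rw [path_simulate, piecewise_empty, sdiff_empty, union_eq_left.mpr (hv _ x)]

lemma distAlg_le_expec_sub_proxyOnly (hv : T.Valid) (hd : T.DeterminesP f) (c : Fin n → Bool)
    (i : Fin n) (b : Bool) :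
    distAlg f (1 / 2) ≤ expec (1 / 2) fun x =>
      (#(T.run (Function.update (x ∆ c) i b) x).1 : ℝ)
        - T.proxyOnly i (Function.update (x ∆ c) i b) x := by
  refine (distAlg_le_expec (by norm_num) (by norm_num)
    (determines_simulate hd {i} (Function.update c i b))).trans
    (expec_mono (by norm_num) (by norm_num) fun x => ?_)
  have h := card_sdiff_singleton_union_add_le (hv (Function.update (x ∆ c) i b) x) i
  rw [path_simulate, piecewise_singleton, Function.update_self, symmDiff_update,
    Function.update_idem]
  unfold proxyOnly
  split_ifs at h ⊢ <;> push_cast [← Nat.cast_le (α := ℝ)] at h <;> linarith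

lemma two_mul_distAlg_add_le (hv : T.Valid) (hd : T.DeterminesP f) {c x₀ : Fin n → Bool}
    {i : Fin n} (hi : i ∈ (T.run (x₀ ∆ c) x₀).1 \ (T.run (x₀ ∆ c) x₀).2) :
    2 * distAlg f (1 / 2) + (1 / 2) ^ n
      ≤ ∑ b : Bool, expec (1 / 2) fun x => (#(T.run (x ∆ Function.update c i b) x).1 : ℝ) := by
  have hnonneg : ∀ z x, 0 ≤ T.proxyOnly i z x := fun z x => by
    unfold proxyOnly; split_ifs <;> norm_num
  have hproxy : (1 / 2) ^ n
      ≤ ∑ b : Bool, expec (1 / 2) fun x => T.proxyOnly i (x ∆ Function.update c i b) x :=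
    calc (1 / 2 : ℝ) ^ n ≤ wt (1 / 2) x₀ * T.proxyOnly i (x₀ ∆ c) x₀ := by
          rw [proxyOnly, if_pos hi, mul_one]
          simpa using pow_card_le_wt (q := 1 / 2) (by norm_num) (by norm_num) x₀
      _ ≤ expec (1 / 2) fun x => T.proxyOnly i (x ∆ Function.update c i (c i)) x := by
          rw [Function.update_eq_self]
          exact single_le_sum (f := fun x => wt (1 / 2) x * T.proxyOnly i (x ∆ c) x)
            (fun x _ => mul_nonneg (wt_nonneg (by norm_num) (by norm_num) x) (hnonneg _ x))
            (mem_univ x₀)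
      _ ≤ _ := single_le_sum (f := fun b => expec (1 / 2) fun x =>
            T.proxyOnly i (x ∆ Function.update c i b) x)
          (fun b _ => le_expec_of_le (by norm_num) (by norm_num) fun x => hnonneg _ x)
          (mem_univ (c i))
  have hswap := sum_bool_expec_update_symmDiff c i fun z x => (#(T.run z x).1 : ℝ)
    - T.proxyOnly i z x
  have htrue := distAlg_le_expec_sub_proxyOnly hv hd c i true
  have hfalse := distAlg_le_expec_sub_proxyOnly hv hd c i false
  simp only [expec_sub, sum_sub_distrib, Fintype.sum_bool] at hswap hproxy htrue hfalse ⊢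
  linarith

theorem distAlg_le_pCost {f : (Fin n → Bool) → Bool} {p κ : ℝ} (hp : 1 / 2 ≤ p) (hp1 : p ≤ 1)
    (hκ1 : κ ≤ 1) (hmargin : (1 - κ) * n ≤ ((1 - p) / 2) ^ n) {T : PTree n} (hv : T.Valid)
    (hd : T.DeterminesP f) : distAlg f (1 / 2) ≤ pCost p κ T := by
  have hq0 : 0 ≤ 1 - p := by linarith
  have hq1 : 1 - p ≤ 1 := by linarith
  have hG := distAlg_le_expec_card_run_fst hv hd
  rw [pCost_eq_sub hv]
  by_cases hD : ∃ c x₀ i, i ∈ (T.run (x₀ ∆ c) x₀).1 \ (T.run (x₀ ∆ c) x₀).2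
  · obtain ⟨c, x₀, i, hi⟩ := hD
    have hne : Function.update c i true ≠ Function.update c i false := fun h => by
      simpa using congrFun h i
    have hW := add_mul_le_expec_of_pair hq0 (by linarith) hG hne
      (by simpa only [Fintype.sum_bool] using two_mul_distAlg_add_le hv hd hi)
    have hL : (expec (1 - p) fun c => expec (1 / 2) fun x =>
        (#((T.run (x ∆ c) x).1 \ (T.run (x ∆ c) x).2) : ℝ)) ≤ n :=
      expec_le_of_le hq0 hq1 fun c => expec_le_of_le (by norm_num) (by norm_num) fun x => by
        exact_mod_cast (card_le_univ _).trans_eq (Fintype.card_fin n)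
    rw [Fintype.card_fin, ← mul_pow, mul_one_div] at hW
    nlinarith
  · push Not at hD
    have hL : (fun c => expec (1 / 2) fun x =>
        (#((T.run (x ∆ c) x).1 \ (T.run (x ∆ c) x).2) : ℝ)) = fun _ => 0 := by
      funext c
      simp [eq_empty_of_forall_notMem (hD c _), expec]
    rw [hL, expec_const, mul_zero, sub_zero]
    exact le_expec_of_le hq0 hq1 hG

end PTree

lemma one_sub_mul_le_of_div_lt {m q κ : ℝ} (hm : 0 ≤ m) (hq : 0 ≤ q) (hκ1 : κ ≤ 1)
    (hκ : 1 / (1 + 1 / m * q) < κ) : (1 - κ) * m ≤ q := by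
  rcases hm.eq_or_lt with rfl | hm
  · simpa using hq
  have hκq : 1 < κ * (1 + 1 / m * q) := (div_lt_iff₀ (by positivity)).mp hκ
  have : (1 - κ) * m < κ * q := by
    rw [mul_add, mul_one, ← mul_assoc, mul_comm κ, mul_assoc, one_div] at hκq
    calc (1 - κ) * m < m⁻¹ * (κ * q) * m := by gcongr; linarith
      _ = κ * q := by field_simp
  nlinarith

theorem aPK_eq_aDist_general (n : ℕ) (f : (Fin n → Bool) → Bool) (p κ : ℝ)
    (hp : 1 / 2 < p) (hp1 : p < 1) (hκ1 : κ ≤ 1)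
    (hκ : 1 / (1 + (1 / (n : ℝ)) * ((1 - p) / 2) ^ n) < κ) :
    aPK f p κ = distAlg f (1 / 2) := by
  have hmargin : (1 - κ) * n ≤ ((1 - p) / 2) ^ n :=
    one_sub_mul_le_of_div_lt n.cast_nonneg (pow_nonneg (by linarith) n) hκ1 hκ
  have hlower : distAlg f (1 / 2) ∈
      lowerBounds {c | ∃ T : PTree n, T.Valid ∧ T.DeterminesP f ∧ c = pCost p κ T} := by
    rintro _ ⟨T, hv, hd, rfl⟩
    exact PTree.distAlg_le_pCost hp.le hp1.le hκ1 hmargin hv hd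
  obtain ⟨S, hS⟩ := DTree.exists_determines f
  apply le_antisymm
  · refine le_csInf ⟨_, S, hS, rfl⟩ ?_
    rintro _ ⟨S', hS', rfl⟩
    exact csInf_le ⟨_, hlower⟩ ⟨PTree.ofDTree S', PTree.valid_ofDTree S',
      PTree.determinesP_ofDTree hS', (PTree.pCost_ofDTree p κ S').symm⟩
  · exact le_csInf ⟨_, PTree.ofDTree S, PTree.valid_ofDTree S,
      PTree.determinesP_ofDTree hS, rfl⟩ hlower

/-- for `p ∈ (1/2,1)` and `κ > κ₀(n,p) = 1/(1 + (1/n)((1-p)/2)^n)`, the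
distributional `(p,κ)`-algorithmic complexity equals the distributional algorithmic
complexity under the uniform measure. -/
theorem aPK_eq_aDist (n : ℕ) (hn : 1 ≤ n) (f : (Fin n → Bool) → Bool) (p κ : ℝ)
    (hp : 1 / 2 < p) (hp1 : p < 1) (hκ1 : κ ≤ 1)
    (hκ : 1 / (1 + (1 / (n : ℝ)) * ((1 - p) / 2) ^ n) < κ) :
    aPK f p κ = distAlg f (1 / 2) :=
  aPK_eq_aDist_general n f p κ hp hp1 hκ1 hκ
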